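/- In the shy dancers Horn PCL theory Δ• over atoms e_{i,j} (i,j ∈ 1..n, n ≥ 2), where each cell (i,j) contributes clauses (e_{p,q} ∧ e_{p',q'}) •(i,j) e_{i,j} for every pair of distinct neighbours (p,q) ≠ (p',q') in the 8-cell neighbourhood of (i,j), and •(i,j) ∈ {→, ↠}: if there exist a cell (i,j) and two distinct neighbours (p,q), (p',q') ∈ I_{i,j} with •(p,q) = •(p',q') = ↠, then Δ• ⊢ e_{p,q} and Δ• ⊢ e_{p',q'} in PCL. -/
import Mathlib


/-- Formulae of Propositional Contract Logic over atoms `A`. -/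
inductive PCLForm (A : Type) : Type
  | atom : A → PCLForm A
  | top  : PCLForm A
  | and  : PCLForm A → PCLForm A → PCLForm A
  | imp  : PCLForm A → PCLForm A → PCLForm A
  | cimp : PCLForm A → PCLForm A → PCLForm A

/-- Natural deduction for PCL: intuitionistic rules plus (↠I1), (↠I2), (↠E). -/
inductive PCLProves {A : Type} : Set (PCLForm A) → PCLForm A → Prop
  | ax {Δ p} : p ∈ Δ → PCLProves Δ p
  | topI {Δ} : PCLProves Δ .top
  | andI {Δ p q} : PCLProves Δ p → PCLProves Δ q → PCLProves Δ (.and p q)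
  | andE1 {Δ p q} : PCLProves Δ (.and p q) → PCLProves Δ p
  | andE2 {Δ p q} : PCLProves Δ (.and p q) → PCLProves Δ q
  | impI {Δ p q} : PCLProves (insert p Δ) q → PCLProves Δ (.imp p q)
  | impE {Δ p q} : PCLProves Δ (.imp p q) → PCLProves Δ p → PCLProves Δ q
  | cimpI1 {Δ p q} : PCLProves Δ q → PCLProves Δ (.cimp p q)
  | cimpI2 {Δ p q p' q'} : PCLProves Δ (.cimp p' q') → PCLProves (insert p Δ) p' →
      PCLProves (insert q' Δ) (.cimp p q) → PCLProves Δ (.cimp p q)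
  | cimpE {Δ p q} : PCLProves Δ (.cimp p q) → PCLProves (insert q Δ) p → PCLProves Δ q

/-- `(p, q)` is in the 8-cell neighbourhood of `(i, j)` on the n×n grid. -/
def Nbr (n i j p q : ℕ) : Prop :=
  1 ≤ p ∧ p ≤ n ∧ 1 ≤ q ∧ q ≤ n ∧ (p, q) ≠ (i, j) ∧
  p ≤ i + 1 ∧ i ≤ p + 1 ∧ q ≤ j + 1 ∧ j ≤ q + 1

/-- The shy dancers Horn PCL theory Δ•: for each cell (i,j) of the n×n grid and
each pair of distinct neighbours (p,q) ≠ (p',q') of (i,j), the clause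
(e_{p,q} ∧ e_{p',q'}) •(i,j) e_{i,j}, where •(i,j) is ↠ if `bullet (i,j)`
and → otherwise. -/
def shyDancers (n : ℕ) (bullet : ℕ × ℕ → Bool) : Set (PCLForm (ℕ × ℕ)) :=
  { F | ∃ i j p q p' q' : ℕ,
      1 ≤ i ∧ i ≤ n ∧ 1 ≤ j ∧ j ≤ n ∧
      Nbr n i j p q ∧ Nbr n i j p' q' ∧ (p, q) ≠ (p', q') ∧
      F = (if bullet (i, j) then PCLForm.cimp else PCLForm.imp)
            (.and (.atom (p, q)) (.atom (p', q'))) (.atom (i, j)) }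


/-- Weakening for PCL natural deduction. -/
lemma PCLProves.weaken {A : Type} {Δ Δ' : Set (PCLForm A)} {p : PCLForm A}
    (h : PCLProves Δ p) (hs : Δ ⊆ Δ') : PCLProves Δ' p := by
  induction h generalizing Δ' with
  | ax hp => exact .ax (hs hp)
  | topI => exact .topI
  | andI _ _ ih1 ih2 => exact .andI (ih1 hs) (ih2 hs)
  | andE1 _ ih => exact .andE1 (ih hs)
  | andE2 _ ih => exact .andE2 (ih hs)
  | impI _ ih => exact .impI (ih (Set.insert_subset_insert hs))
  | impE _ _ ih1 ih2 => exact .impE (ih1 hs) (ih2 hs)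
  | cimpI1 _ ih => exact .cimpI1 (ih hs)
  | cimpI2 _ _ _ ih1 ih2 ih3 =>
      exact .cimpI2 (ih1 hs) (ih2 (Set.insert_subset_insert hs))
        (ih3 (Set.insert_subset_insert hs))
  | cimpE _ _ ih1 ih2 => exact .cimpE (ih1 hs) (ih2 (Set.insert_subset_insert hs))

/-- Symmetry of the neighbourhood relation. -/
lemma nbr_symm {n i j p q : ℕ} (hi : 1 ≤ i) (hi' : i ≤ n) (hj : 1 ≤ j) (hj' : j ≤ n)
    (h : Nbr n i j p q) : Nbr n p q i j := by
  simp only [Nbr, ne_eq, Prod.mk.injEq, not_and] at h ⊢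
  omega

/-- A common neighbour of a cell and one of its neighbours always exists (n ≥ 2). -/
lemma common_nbr {n i j p q : ℕ} (hn : 2 ≤ n)
    (hi : 1 ≤ i) (hi' : i ≤ n) (hj : 1 ≤ j) (hj' : j ≤ n)
    (h : Nbr n i j p q) :
    ∃ u v, 1 ≤ u ∧ u ≤ n ∧ 1 ≤ v ∧ v ≤ n ∧ Nbr n u v p q ∧ Nbr n u v i j := by
  simp only [Nbr, ne_eq, Prod.mk.injEq, not_and] at h
  by_cases hp : p = i
  · -- then q ≠ j
    refine ⟨if i < n then i + 1 else i - 1, q, ?_, ?_, ?_, ?_, ?_, ?_⟩ <;>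
      (try simp only [Nbr, ne_eq, Prod.mk.injEq, not_and]) <;>
      first
        | (split <;> omega)
        | omega
  · by_cases hq : q = j
    · refine ⟨i, if j < n then j + 1 else j - 1, ?_, ?_, ?_, ?_, ?_, ?_⟩ <;>
        (try simp only [Nbr, ne_eq, Prod.mk.injEq, not_and]) <;>
        first
          | (split <;> omega)
          | omega
    · refine ⟨p, j, ?_, ?_, ?_, ?_, ?_, ?_⟩ <;>
        (try simp only [Nbr, ne_eq, Prod.mk.injEq, not_and]) <;>
        omega

/-- If both neighbours of a clause are derivable, the head of the clause is. -/
lemma derive_cell {n : ℕ} {bullet : ℕ × ℕ → Bool} {Γ : Set (PCLForm (ℕ × ℕ))}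
    (hsub : shyDancers n bullet ⊆ Γ)
    {i j p q p' q' : ℕ}
    (hi : 1 ≤ i) (hi' : i ≤ n) (hj : 1 ≤ j) (hj' : j ≤ n)
    (h1 : Nbr n i j p q) (h2 : Nbr n i j p' q') (hne : (p, q) ≠ (p', q'))
    (ha : PCLProves Γ (.atom (p, q))) (hb : PCLProves Γ (.atom (p', q'))) :
    PCLProves Γ (.atom (i, j)) := by
  have hcl : (if bullet (i, j) then PCLForm.cimp else PCLForm.imp)
      (.and (.atom (p, q)) (.atom (p', q'))) (.atom (i, j)) ∈ Γ :=
    hsub ⟨i, j, p, q, p', q', hi, hi', hj, hj', h1, h2, hne, rfl⟩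
  cases hB : bullet (i, j) with
  | false =>
      rw [hB] at hcl; simp only [Bool.false_eq_true, if_false] at hcl
      exact .impE (.ax hcl) (.andI ha hb)
  | true =>
      rw [hB] at hcl; simp only [if_true] at hcl
      exact .cimpE (.ax hcl)
        (.andI (ha.weaken (Set.subset_insert _ _)) (hb.weaken (Set.subset_insert _ _)))

/-- if some cell (i,j) has two distinct neighbours (p,q), (p',q')
both using ↠, then Δ• ⊢ e_{p,q} and Δ• ⊢ e_{p',q'}. -/
theorem shyDancers_bootstrap (n : ℕ) (hn : 2 ≤ n) (bullet : ℕ × ℕ → Bool)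
    (i j p q p' q' : ℕ)
    (hi : 1 ≤ i) (hi' : i ≤ n) (hj : 1 ≤ j) (hj' : j ≤ n)
    (h1 : Nbr n i j p q) (h2 : Nbr n i j p' q') (hne : (p, q) ≠ (p', q'))
    (hb : bullet (p, q) = true) (hb' : bullet (p', q') = true) :
    PCLProves (shyDancers n bullet) (.atom (p, q)) ∧
    PCLProves (shyDancers n bullet) (.atom (p', q')) := by
  set Δ := shyDancers n bullet with hΔ
  -- c := (i,j); get common neighbours of (p,q)&(i,j) and of (p',q')&(i,j)
  obtain ⟨u, v, hu, hu', hv, hv', hA1, hA2⟩ := common_nbr hn hi hi' hj hj' h1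
  obtain ⟨u', v', hu2, hu2', hv2, hv2', hB1, hB2⟩ := common_nbr hn hi hi' hj hj' h2
  have hpqij : Nbr n p q i j := nbr_symm hi hi' hj hj' h1
  have hpqij' : Nbr n p' q' i j := nbr_symm hi hi' hj hj' h2
  have hpquv : Nbr n p q u v := nbr_symm hu hu' hv hv' hA1
  have hpquv' : Nbr n p' q' u' v' := nbr_symm hu2 hu2' hv2 hv2' hB1
  -- key step: from a and b derive the antecedents of the two contracts
  have key : ∀ Γ : Set (PCLForm (ℕ × ℕ)), Δ ⊆ Γ →
      PCLProves Γ (.atom (p, q)) → PCLProves Γ (.atom (p', q')) →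
      PCLProves Γ (.and (.atom (i, j)) (.atom (u, v))) ∧
      PCLProves Γ (.and (.atom (i, j)) (.atom (u', v'))) := by
    intro Γ hΓ ha hb
    have hc : PCLProves Γ (.atom (i, j)) :=
      derive_cell hΓ hi hi' hj hj' h1 h2 hne ha hb
    have hda : PCLProves Γ (.atom (u, v)) :=
      derive_cell hΓ hu hu' hv hv' hA1 hA2 h1.2.2.2.2.1 ha hc
    have hdb : PCLProves Γ (.atom (u', v')) :=
      derive_cell hΓ hu2 hu2' hv2 hv2' hB1 hB2 h2.2.2.2.2.1 hb hc
    exact ⟨.andI hc hda, .andI hc hdb⟩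
  -- the two ↠ clauses for cells (p,q) and (p',q')
  have hclA : PCLForm.cimp (.and (.atom (i, j)) (.atom (u, v))) (.atom (p, q)) ∈ Δ := by
    have : (if bullet (p, q) then PCLForm.cimp else PCLForm.imp)
        (.and (.atom (i, j)) (.atom (u, v))) (.atom (p, q)) ∈ Δ :=
      ⟨p, q, i, j, u, v, h1.1, h1.2.1, h1.2.2.1, h1.2.2.2.1, hpqij, hpquv,
        hA2.2.2.2.2.1, rfl⟩
    rwa [hb, if_pos rfl] at this
  have hclB : PCLForm.cimp (.and (.atom (i, j)) (.atom (u', v'))) (.atom (p', q')) ∈ Δ := by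
    have : (if bullet (p', q') then PCLForm.cimp else PCLForm.imp)
        (.and (.atom (i, j)) (.atom (u', v'))) (.atom (p', q')) ∈ Δ :=
      ⟨p', q', i, j, u', v', h2.1, h2.2.1, h2.2.2.1, h2.2.2.2.1, hpqij', hpquv',
        hB2.2.2.2.2.1, rfl⟩
    rwa [hb', if_pos rfl] at this
  -- bootstrap: derive a := e_{p,q}
  have pa : PCLProves Δ (.atom (p, q)) := by
    refine .cimpE (.ax hclA) ?_
    -- context Γ₁ = insert a Δ
    set Γ₁ : Set (PCLForm (ℕ × ℕ)) := insert (PCLForm.atom (p, q)) Δ with hΓ₁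
    have hsub1 : Δ ⊆ Γ₁ := Set.subset_insert _ _
    have ha1 : PCLProves Γ₁ (.atom (p, q)) := .ax (Set.mem_insert _ _)
    have hb1 : PCLProves Γ₁ (.atom (p', q')) := by
      refine .cimpE (.ax (hsub1 hclB)) ?_
      have hsub2 : Δ ⊆ insert (PCLForm.atom (p', q')) Γ₁ :=
        hsub1.trans (Set.subset_insert _ _)
      exact (key _ hsub2 (ha1.weaken (Set.subset_insert _ _))
        (.ax (Set.mem_insert _ _))).2
    exact (key Γ₁ hsub1 ha1 hb1).1
  have pb : PCLProves Δ (.atom (p', q')) := by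
    refine .cimpE (.ax hclB) ?_
    have hsub1 : Δ ⊆ insert (PCLForm.atom (p', q')) Δ := Set.subset_insert _ _
    exact (key _ hsub1 (pa.weaken hsub1) (.ax (Set.mem_insert _ _))).2
  exact ⟨pa, pb⟩
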